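/- Fix v = (0, c, d) with c ≠ 0 (real numbers). For i = 1, 2 let v_i = (r_i, c_i, d_i) be a triple of real numbers with r_i ≠ 0, and let W_i = { (s, t) : t > 0 and (s² + t²)(−r_i c) + 2s·r_i d + 2(c d_i − c_i d) = 0 } be the corresponding potential wall of v in the upper half plane. Then either W₁ = W₂ or W₁ ∩ W₂ = ∅; that is, the rank-zero potential walls are concentric (hence nested) semicircles. -/

import Mathlib

/-- The potential wall in the upper half plane for `v = (0, c, d)` and a destabilizing
class `(rᵢ, cᵢ, dᵢ)` with `rᵢ ≠ 0`. -/
def rankZeroWall (c d rᵢ cᵢ dᵢ : ℝ) : Set (ℝ × ℝ) :=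
  {p | 0 < p.2 ∧
    (p.1 ^ 2 + p.2 ^ 2) * (-(rᵢ * c)) + 2 * p.1 * (rᵢ * d) + 2 * (c * dᵢ - cᵢ * d) = 0}

/-! Dividing the defining equation by `-rᵢ c` and completing the square shows that every
rank-zero wall is a level set of the squared distance to `(d / c, 0)` in the upper half
plane; two level sets of one function are equal or disjoint. -/

theorem Set.inter_preimage_singleton_eq_or_eq_empty {α β : Type*} (s : Set α) (f : α → β)
    (a b : β) :
    s ∩ f ⁻¹' {a} = s ∩ f ⁻¹' {b} ∨ s ∩ f ⁻¹' {a} ∩ (s ∩ f ⁻¹' {b}) = ∅ := by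
  by_cases hab : a = b
  · exact Or.inl (hab ▸ rfl)
  · right
    ext x
    simp only [Set.mem_inter_iff, Set.mem_preimage, Set.mem_singleton_iff,
      Set.mem_empty_iff_false, iff_false]
    rintro ⟨⟨-, rfl⟩, -, hb⟩
    exact hab hb

theorem rankZeroWall_eq_inter_preimage {c d rᵢ cᵢ dᵢ : ℝ} (hc : c ≠ 0) (hr : rᵢ ≠ 0) :
    rankZeroWall c d rᵢ cᵢ dᵢ = {p : ℝ × ℝ | 0 < p.2} ∩
      (fun p : ℝ × ℝ => (p.1 - d / c) ^ 2 + p.2 ^ 2) ⁻¹'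
        {(d / c) ^ 2 + 2 * (c * dᵢ - cᵢ * d) / (rᵢ * c)} := by
  ext p
  simp only [rankZeroWall, Set.mem_inter_iff, Set.mem_ofPred_eq, Set.mem_preimage,
    Set.mem_singleton_iff]
  refine and_congr_right fun _ => ?_
  have hrc : rᵢ * c ≠ 0 := mul_ne_zero hr hc
  have completed_square : (p.1 ^ 2 + p.2 ^ 2) * (-(rᵢ * c)) + 2 * p.1 * (rᵢ * d)
      + 2 * (c * dᵢ - cᵢ * d) = -(rᵢ * c) * ((p.1 - d / c) ^ 2 + p.2 ^ 2
        - ((d / c) ^ 2 + 2 * (c * dᵢ - cᵢ * d) / (rᵢ * c))) := by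
    field_simp
    ring
  rw [completed_square, mul_eq_zero, neg_eq_zero, sub_eq_zero, or_iff_right hrc]

/-- Rank-zero potential walls are concentric semicircles: any two of them are either
equal or disjoint. -/
theorem rank_zero_walls_nested (c d : ℝ) (hc : c ≠ 0)
    (r₁ c₁ d₁ r₂ c₂ d₂ : ℝ) (h₁ : r₁ ≠ 0) (h₂ : r₂ ≠ 0) :
    rankZeroWall c d r₁ c₁ d₁ = rankZeroWall c d r₂ c₂ d₂ ∨
      rankZeroWall c d r₁ c₁ d₁ ∩ rankZeroWall c d r₂ c₂ d₂ = ∅ := by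
  rw [rankZeroWall_eq_inter_preimage hc h₁, rankZeroWall_eq_inter_preimage hc h₂]
  exact Set.inter_preimage_singleton_eq_or_eq_empty _ _ _ _
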